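/- arXiv:0804.0870 — 6 statements merged into one kernel-verified Lean document; each statement's English description precedes it below -/
import Mathlib

section
/- For every λ ≥ 0 and t > 0: e⁻¹ · χ_{[0,t)}(λ) ≤ e^{−λ/t} ≤ (e − 1) · Σ_{j=1}^∞ e^{−j} χ_{[0,jt)}(λ). -/
/-! With `m = ⌊λ/t⌋`, the point `λ` lies in `[0, jt)` exactly when `j ≥ m + 1`, so the series is the
geometric tail `Σ_{j > m} e^{-j} = e^{-m} / (e - 1)`. The upper bound is therefore
`e^{-λ/t} ≤ e^{-⌊λ/t⌋}`; the lower bound is `λ/t < 1` on `[0, t)`. -/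

open Real Set

theorem hasSum_indicator_Ici_geometric {r : ℝ} (hr0 : 0 ≤ r) (hr1 : r < 1) (m : ℕ) :
    HasSum ((Ici m).indicator fun j => r ^ j) (r ^ m / (1 - r)) := by
  rw [← hasSum_nat_add_iff' m]
  have hhead : ∑ i ∈ Finset.range m, (Ici m).indicator (fun j => r ^ j) i = 0 :=
    Finset.sum_eq_zero fun i hi => indicator_of_notMem (by simpa using hi) _
  have htail : (fun k => (Ici m).indicator (fun j => r ^ j) (k + m)) = fun k => r ^ m * r ^ k :=
    funext fun k => by
      rw [indicator_of_mem (show k + m ∈ Ici m from Nat.le_add_left m k), pow_add, mul_comm]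
  rw [hhead, sub_zero, htail, div_eq_mul_inv]
  exact (hasSum_geometric_of_lt_one hr0 hr1).mul_left _

theorem mem_Ico_zero_succ_mul_iff_floor_div_le {l t : ℝ} (hl : 0 ≤ l) (ht : 0 < t) (j : ℕ) :
    l ∈ Ico 0 (((j : ℝ) + 1) * t) ↔ ⌊l / t⌋₊ ≤ j := by
  rw [← Nat.lt_succ_iff, Nat.floor_lt (div_nonneg hl ht.le), Nat.cast_succ, div_lt_iff₀ ht]
  simp [hl]

theorem exp_one_sub_one_ne_zero : exp 1 - 1 ≠ 0 :=
  sub_ne_zero.2 (one_lt_exp_iff.2 one_pos).ne'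

theorem hasSum_exp_neg_succ_mul_indicator {l t : ℝ} (hl : 0 ≤ l) (ht : 0 < t) :
    HasSum (fun j : ℕ => exp (-((j : ℝ) + 1)) * (Ico 0 (((j : ℝ) + 1) * t)).indicator 1 l)
      (exp (-⌊l / t⌋₊) / (exp 1 - 1)) := by
  have hterm : ∀ j : ℕ, exp (-((j : ℝ) + 1)) * (Ico 0 (((j : ℝ) + 1) * t)).indicator 1 l
      = exp (-1) * (Ici ⌊l / t⌋₊).indicator (fun j => exp (-1) ^ j) j := by
    intro j
    by_cases hj : ⌊l / t⌋₊ ≤ j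
    · rw [indicator_of_mem ((mem_Ico_zero_succ_mul_iff_floor_div_le hl ht j).2 hj),
        indicator_of_mem (mem_Ici.2 hj), Pi.one_apply, mul_one, ← exp_nat_mul, ← exp_add]
      ring_nf
    · rw [indicator_of_notMem (mt (mem_Ico_zero_succ_mul_iff_floor_div_le hl ht j).1 hj),
        indicator_of_notMem (mt mem_Ici.1 hj), mul_zero, mul_zero]
  have hsum := (hasSum_indicator_Ici_geometric (exp_pos (-1)).le
    (exp_lt_one_iff.2 neg_one_lt_zero) ⌊l / t⌋₊).mul_left (exp (-1))
  have hvalue : exp (-⌊l / t⌋₊) / (exp 1 - 1)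
      = exp (-1) * (exp (-1) ^ ⌊l / t⌋₊ / (1 - exp (-1))) := by
    have he : exp 1 * exp (-1) = 1 := by rw [← exp_add, add_neg_cancel, exp_zero]
    have he1 := exp_one_sub_one_ne_zero
    have he2 : 1 - exp (-1) ≠ 0 := sub_ne_zero.2 (exp_lt_one_iff.2 neg_one_lt_zero).ne'
    rw [← exp_nat_mul, mul_neg_one]
    field_simp
    linear_combination -he
  simp only [hterm, hvalue]
  exact hsum

/-- For every `λ ≥ 0` and `t > 0`:
`e⁻¹ · χ_{[0,t)}(λ) ≤ e^{−λ/t} ≤ (e − 1) · Σ_{j=1}^∞ e^{−j} χ_{[0,jt)}(λ)`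
(the sum is over the positive integers, written here as `j+1` with `j : ℕ`). -/
theorem statement2 (l t : ℝ) (hl : 0 ≤ l) (ht : 0 < t) :
    Real.exp (-1) * Set.indicator (Set.Ico (0:ℝ) t) 1 l ≤ Real.exp (-(l / t)) ∧
    Real.exp (-(l / t)) ≤ (Real.exp 1 - 1) *
      ∑' j : ℕ, Real.exp (-((j : ℝ) + 1)) *
        Set.indicator (Set.Ico (0:ℝ) (((j : ℝ) + 1) * t)) 1 l := by
  constructor
  · by_cases h : l ∈ Ico 0 t
    · rw [indicator_of_mem h, Pi.one_apply, mul_one, exp_le_exp, neg_le_neg_iff]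
      exact (div_le_one ht).2 h.2.le
    · rw [indicator_of_notMem h, mul_zero]
      exact (exp_pos _).le
  · rw [(hasSum_exp_neg_succ_mul_indicator hl ht).tsum_eq,
      mul_div_cancel₀ _ exp_one_sub_one_ne_zero, exp_le_exp, neg_le_neg_iff]
    exact Nat.floor_le (div_nonneg hl ht.le)
end

section
/- Let L be a positive self-adjoint operator on a Hilbert space H with spectral measure E, and write E_t = E([0,t)). Then for every f ∈ H and t > 0: e⁻¹ ‖E_t f‖ ≤ ‖e^{−L/t} f‖ ≤ (e − 1) Σ_{j=1}^∞ e^{−j} ‖E_{jt} f‖. -/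
/-!
With `ν = ‖E(·) f‖²`, the norms `‖e^{−L/t} f‖` and `‖E_s f‖` are the `L²(ν)` norms of
`λ ↦ e^{−λ/t}` and of the indicator of `[0, s)`. The lower bound holds because `e^{−λ/t} ≥ e^{−1}`
on `[0, t)`. For the upper bound, Abel summation gives
`e^{−⌊λ/t⌋} = (e − 1) Σ_j e^{−(j+1)} 1_{[0,(j+1)t)}(λ)` for `λ ≥ 0`, which dominates `e^{−λ/t}`,
and Minkowski's inequality for this series of indicators bounds the `L²(ν)` norm.
-/

open MeasureTheory Filter Real
open scoped ENNReal

namespace MeasureTheory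

theorem eLpNorm_le_tsum_of_hasSum {α E : Type*} [MeasurableSpace α] {μ : Measure α}
    [NormedAddCommGroup E] {p : ℝ≥0∞} {f : ℕ → α → E} {g : α → E}
    (hf : ∀ n, AEStronglyMeasurable (f n) μ) (hg : ∀ᵐ x ∂μ, HasSum (f · x) (g x)) (hp : 1 ≤ p) :
    eLpNorm g p μ ≤ ∑' n, eLpNorm (f n) p μ := by
  refine Lp.eLpNorm_le_of_ae_tendsto (u := atTop) (f := fun n => ∑ i ∈ Finset.range n, f i)
    (Eventually.of_forall fun n => ?_)
    (fun n => Finset.aestronglyMeasurable_sum _ fun i _ => hf i) ?_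
  · exact (eLpNorm_sum_le (fun i _ => hf i) hp).trans (ENNReal.sum_le_tsum _)
  · filter_upwards [hg] with x hx
    simpa only [Finset.sum_apply] using hx.tendsto_sum_nat

section L2

variable {α : Type*} [MeasurableSpace α] {μ : Measure α}

theorem MemLp.eLpNorm_two_eq_ofReal_sqrt {g : α → ℝ} (hg : MemLp g 2 μ) :
    eLpNorm g 2 μ = ENNReal.ofReal √(∫ x, g x ^ 2 ∂μ) := by
  rw [hg.eLpNorm_eq_integral_rpow_norm two_ne_zero ENNReal.ofNat_ne_top, Real.sqrt_eq_rpow]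
  norm_num [Real.norm_eq_abs, sq_abs]

theorem eLpNorm_two_indicator_const {s : Set α} (hs : MeasurableSet s) (hμs : μ s ≠ ∞) {c : ℝ}
    (hc : 0 ≤ c) :
    eLpNorm (s.indicator fun _ => c) 2 μ = ENNReal.ofReal (c * √(μ s).toReal) := by
  rw [eLpNorm_indicator_const hs two_ne_zero ENNReal.ofNat_ne_top, ENNReal.ofReal_mul hc,
    Real.sqrt_eq_rpow, ← ENNReal.ofReal_rpow_of_nonneg ENNReal.toReal_nonneg (by norm_num),
    ENNReal.ofReal_toReal hμs, Real.enorm_of_nonneg hc]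
  norm_num

end L2

end MeasureTheory

theorem exp_neg_natFloor_eq_tsum {x : ℝ} (hx : 0 ≤ x) :
    rexp (-⌊x⌋₊) = ∑' j : ℕ, if x < j + 1 then (rexp 1 - 1) * rexp (-(j + 1)) else 0 := by
  set n := ⌊x⌋₊
  set f : ℕ → ℝ := fun j => if x < j + 1 then (rexp 1 - 1) * rexp (-(j + 1)) else 0
  have hshift : ∀ i, f (i + n) = (rexp 1 - 1) * rexp (-(n + 1)) * rexp (-1) ^ i := by
    intro i
    have : x < (i + n : ℕ) + 1 := by
      push_cast; linarith [Nat.lt_floor_add_one x, (Nat.cast_nonneg i : (0:ℝ) ≤ i)]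
    simp only [f, if_pos this, ← exp_nat_mul, mul_assoc, ← exp_add]
    push_cast; ring_nf
  have hgeom : HasSum (fun i => f (i + n)) (rexp (-n)) := by
    have := (hasSum_geometric_of_lt_one (exp_pos (-1)).le
      (exp_lt_one_iff.mpr (by norm_num))).mul_left ((rexp 1 - 1) * rexp (-(n + 1)))
    have hval : (rexp 1 - 1) * rexp (-(n + 1)) * (1 - rexp (-1))⁻¹ = rexp (-n) := by
      rw [exp_neg, exp_neg, exp_neg, exp_add]
      have : rexp 1 - 1 ≠ 0 := by linarith [add_one_lt_exp (one_ne_zero (α := ℝ))]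
      field_simp
    rwa [funext hshift, ← hval]
  have hhead : ∑ i ∈ Finset.range n, f i = 0 := by
    refine Finset.sum_eq_zero fun i hi => if_neg ?_
    have : ((i + 1 : ℕ) : ℝ) ≤ x := (Nat.le_floor_iff hx).mp (Finset.mem_range.mp hi)
    push_cast at this; linarith
  rw [← ((summable_nat_add_iff n).mp hgeom.summable).sum_add_tsum_nat_add n, hhead, zero_add,
    hgeom.tsum_eq]

theorem exp_neg_div_le_tsum_indicator {l t : ℝ} (hl : 0 ≤ l) (ht : 0 < t) :
    rexp (-(l / t)) ≤ ∑' j : ℕ, (Set.Ico 0 (((j : ℝ) + 1) * t)).indicator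
      (fun _ => (rexp 1 - 1) * rexp (-((j : ℝ) + 1))) l := by
  have hlt : 0 ≤ l / t := div_nonneg hl ht.le
  calc rexp (-(l / t)) ≤ rexp (-⌊l / t⌋₊) := exp_le_exp.mpr (neg_le_neg (Nat.floor_le hlt))
    _ = _ := by
      rw [exp_neg_natFloor_eq_tsum hlt]
      refine tsum_congr fun j => ?_
      simp only [Set.indicator_apply, Set.mem_Ico, hl, true_and, div_lt_iff₀ ht]

section SpectralMeasure

variable {ν : Measure ℝ} [IsFiniteMeasure ν] {t : ℝ}

theorem memLp_exp_neg_div (hsupp : ν (Set.Iio 0) = 0) (ht : 0 ≤ t) :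
    MemLp (fun l => rexp (-(l / t))) 2 ν := by
  refine MemLp.of_bound (by fun_prop) 1 ?_
  filter_upwards [measure_eq_zero_iff_ae_notMem.mp hsupp] with l hl
  rw [norm_of_nonneg (exp_pos _).le, exp_le_one_iff, neg_nonpos]
  exact div_nonneg (not_lt.mp hl) ht

theorem eLpNorm_exp_neg_div (hsupp : ν (Set.Iio 0) = 0) (ht : 0 ≤ t) :
    eLpNorm (fun l => rexp (-(l / t))) 2 ν = ENNReal.ofReal √(∫ l, rexp (-(2 * l / t)) ∂ν) := by
  rw [(memLp_exp_neg_div hsupp ht).eLpNorm_two_eq_ofReal_sqrt]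
  congr 3 with l
  rw [sq, ← exp_add]
  ring_nf

theorem exp_neg_one_mul_sqrt_measure_Ico_le (hsupp : ν (Set.Iio 0) = 0) (ht : 0 < t) :
    rexp (-1) * √(ν (Set.Ico 0 t)).toReal ≤ √(∫ l, rexp (-(2 * l / t)) ∂ν) := by
  rw [← ENNReal.ofReal_le_ofReal_iff (sqrt_nonneg _), ← eLpNorm_exp_neg_div hsupp ht.le,
    ← eLpNorm_two_indicator_const measurableSet_Ico (measure_ne_top _ _) (exp_pos _).le]
  refine eLpNorm_mono fun l => ?_
  by_cases hl : l ∈ Set.Ico 0 t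
  · rw [Set.indicator_of_mem hl, norm_of_nonneg (exp_pos _).le, norm_of_nonneg (exp_pos _).le,
      exp_le_exp, neg_le_neg_iff, div_le_one ht]
    exact hl.2.le
  · rw [Set.indicator_of_notMem hl, norm_zero]
    exact norm_nonneg _

theorem sqrt_integral_exp_neg_le_tsum (hsupp : ν (Set.Iio 0) = 0) (ht : 0 < t) :
    √(∫ l, rexp (-(2 * l / t)) ∂ν) ≤
      (rexp 1 - 1) *
        ∑' j : ℕ, rexp (-((j : ℝ) + 1)) * √(ν (Set.Ico 0 (((j : ℝ) + 1) * t))).toReal := by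
  set s : ℕ → Set ℝ := fun j => Set.Ico 0 (((j : ℝ) + 1) * t)
  set c : ℕ → ℝ := fun j => (rexp 1 - 1) * rexp (-((j : ℝ) + 1))
  have hc : ∀ j, 0 ≤ c j := fun j =>
    mul_nonneg (sub_nonneg.mpr (one_le_exp zero_le_one)) (exp_pos _).le
  have hc_summable : Summable c := by
    simpa only [Nat.cast_add_one] using
      ((summable_nat_add_iff 1).mpr summable_exp_neg_nat).mul_left (rexp 1 - 1)
  have hterms : Summable fun j => c j * √(ν (s j)).toReal :=
    (hc_summable.mul_right √(ν Set.univ).toReal).of_nonneg_of_le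
      (fun j => mul_nonneg (hc j) (sqrt_nonneg _))
      fun j => mul_le_mul_of_nonneg_left (sqrt_le_sqrt (ENNReal.toReal_mono (measure_ne_top _ _)
        (measure_mono (Set.subset_univ _)))) (hc j)
  have hhasSum : ∀ l, HasSum (fun j => (s j).indicator (fun _ => c j) l)
      (∑' j, (s j).indicator (fun _ => c j) l) := fun l =>
    (hc_summable.of_nonneg_of_le (fun j => Set.indicator_nonneg (fun _ _ => hc j) l)
      fun j => Set.indicator_le_self' (fun _ _ => hc j) l).hasSum
  have hdom : ∀ᵐ l ∂ν, ‖rexp (-(l / t))‖ ≤ ∑' j, (s j).indicator (fun _ => c j) l := by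
    filter_upwards [measure_eq_zero_iff_ae_notMem.mp hsupp] with l hl
    rw [norm_of_nonneg (exp_pos _).le]
    exact exp_neg_div_le_tsum_indicator (not_lt.mp hl) ht
  have hrhs : (rexp 1 - 1) * ∑' j : ℕ, rexp (-((j : ℝ) + 1)) *
      √(ν (Set.Ico 0 (((j : ℝ) + 1) * t))).toReal = ∑' j, c j * √(ν (s j)).toReal := by
    simp only [s, c, mul_assoc, tsum_mul_left]
  rw [hrhs, ← ENNReal.ofReal_le_ofReal_iff
    (tsum_nonneg fun j => mul_nonneg (hc j) (sqrt_nonneg _)), ← eLpNorm_exp_neg_div hsupp ht.le]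
  calc eLpNorm (fun l => rexp (-(l / t))) 2 ν
      ≤ eLpNorm (fun l => ∑' j, (s j).indicator (fun _ => c j) l) 2 ν :=
        eLpNorm_mono_ae_real hdom
    _ ≤ ∑' j, eLpNorm ((s j).indicator fun _ => c j) 2 ν :=
        eLpNorm_le_tsum_of_hasSum
          (fun j => aestronglyMeasurable_const.indicator measurableSet_Ico)
          (ae_of_all _ hhasSum) one_le_two
    _ = ENNReal.ofReal (∑' j, c j * √(ν (s j)).toReal) := by
        rw [ENNReal.ofReal_tsum_of_nonneg (fun j => mul_nonneg (hc j) (sqrt_nonneg _)) hterms]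
        exact tsum_congr fun j =>
          eLpNorm_two_indicator_const measurableSet_Ico (measure_ne_top _ _) (hc j)

end SpectralMeasure

theorem statement3_general
    (ν : Measure ℝ) [IsFiniteMeasure ν]
    (hsupp : ν (Set.Iio 0) = 0)
    (t : ℝ) (ht : 0 < t) :
    Real.exp (-1) * Real.sqrt (ν (Set.Ico 0 t)).toReal ≤
      Real.sqrt (∫ l, Real.exp (-(2 * l / t)) ∂ν) ∧
    Real.sqrt (∫ l, Real.exp (-(2 * l / t)) ∂ν) ≤
      (Real.exp 1 - 1) * ∑' j : ℕ,
        Real.exp (-((j : ℝ) + 1)) * Real.sqrt (ν (Set.Ico 0 (((j : ℝ) + 1) * t))).toReal :=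
  ⟨exp_neg_one_mul_sqrt_measure_Ico_le hsupp ht, sqrt_integral_exp_neg_le_tsum hsupp ht⟩

/-- `L` a positive self-adjoint operator on a Hilbert space `H` with spectral
measure `E`, `E_t = E([0,t))`. Via the spectral theorem we encode the data of `L` and `f ∈ H`
by the finite Borel measure `ν = ‖E(·) f‖²` on `[0,∞)`, so that
`‖E_t f‖ = √(ν [0,t))` and `‖e^{−L/t} f‖ = √(∫ e^{−2λ/t} dν(λ))`. Then for `t > 0`:
`e⁻¹ ‖E_t f‖ ≤ ‖e^{−L/t} f‖ ≤ (e − 1) Σ_{j=1}^∞ e^{−j} ‖E_{jt} f‖`. -/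
theorem statement3
    {H : Type*} [NormedAddCommGroup H] [InnerProductSpace ℂ H] (f : H)
    (ν : Measure ℝ) [IsFiniteMeasure ν]
    (hsupp : ν (Set.Iio 0) = 0)
    (htotal : ν Set.univ = ENNReal.ofReal (‖f‖ ^ 2))
    (t : ℝ) (ht : 0 < t) :
    Real.exp (-1) * Real.sqrt (ν (Set.Ico 0 t)).toReal ≤
      Real.sqrt (∫ l, Real.exp (-(2 * l / t)) ∂ν) ∧
    Real.sqrt (∫ l, Real.exp (-(2 * l / t)) ∂ν) ≤
      (Real.exp 1 - 1) * ∑' j : ℕ,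
        Real.exp (-((j : ℝ) + 1)) * Real.sqrt (ν (Set.Ico 0 (((j : ℝ) + 1) * t))).toReal :=
  statement3_general ν hsupp t ht
end

section
/- Let Φ be a finite, nonidentically-zero, nonnegative measurable function on [0,∞), α > 0, and suppose ∫₀^r s^{−α−1} Φ(s) ds ≤ C r^{−α} Φ(r) holds for all r in an unbounded interval I ⊆ (0,∞). Then there exist constants c > 0 and r₀ such that Φ(r) ≥ c r^α for all r ≥ r₀. -/
/-!
Since `Φ` is not a.e. zero, the weighted integral `∫₀^R s^{-α-1} Φ(s) ds` is some `ε > 0`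
for a suitable `R`, and being an unbounded interval, `I` contains the whole half-line
`[r₁, ∞)` for any `r₁ ∈ I` beyond `R`. For `r ≥ r₁` the hypothesis then gives
`ε ≤ C r^{-α} Φ(r)`.
-/

open MeasureTheory Set

lemma Set.OrdConnected.Ici_subset_of_not_bddAbove {β : Type*} [LinearOrder β] {I : Set β}
    (hI : I.OrdConnected) (hunb : ¬ BddAbove I) {x : β} (hx : x ∈ I) : Ici x ⊆ I := by
  intro y hy
  obtain ⟨z, hz, hyz⟩ := not_bddAbove_iff.1 hunb y
  exact hI.out hx hz ⟨hy, hyz.le⟩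

lemma Ioi_eq_iUnion_Ioo_natCast (a : ℝ) : Ioi a = ⋃ n : ℕ, Ioo a n := by
  ext x
  simp only [mem_Ioi, mem_iUnion, mem_Ioo]
  exact ⟨fun hx => (exists_nat_gt x).imp fun _ hn => ⟨hx, hn⟩, fun ⟨_, hx, _⟩ => hx⟩

lemma exists_lt_not_ae_restrict_Ioo {μ : Measure ℝ} {p : ℝ → Prop} {a : ℝ}
    (h : ¬ ∀ᵐ x ∂μ.restrict (Ioi a), p x) :
    ∃ b, a < b ∧ ¬ ∀ᵐ x ∂μ.restrict (Ioo a b), p x := by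
  rw [Ioi_eq_iUnion_Ioo_natCast, ae_restrict_iUnion_iff] at h
  obtain ⟨n, hn⟩ := not_forall.1 h
  refine ⟨n, lt_of_not_ge fun hna => hn ?_, hn⟩
  simp [Ioo_eq_empty_of_le hna]

lemma setLIntegral_ofReal_mul_pos {α : Type*} [MeasurableSpace α] {μ : Measure α}
    {s : Set α} (hs : MeasurableSet s) {g Φ : α → ℝ}
    (hg : Measurable g) (hΦ : Measurable Φ)
    (hg_pos : ∀ x ∈ s, 0 < g x) (hΦ_nonneg : ∀ x, 0 ≤ Φ x)
    (hne : ¬ ∀ᵐ x ∂μ.restrict s, Φ x = 0) :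
    0 < ∫⁻ x in s, ENNReal.ofReal (g x * Φ x) ∂μ := by
  refine pos_iff_ne_zero.2 fun h0 => hne ?_
  rw [setLIntegral_eq_zero_iff hs (by fun_prop)] at h0
  rw [ae_restrict_iff' hs]
  filter_upwards [h0] with x hx hxs
  have hprod : g x * Φ x ≤ 0 := ENNReal.ofReal_eq_zero.1 (hx hxs)
  exact le_antisymm (nonpos_of_mul_nonpos_right hprod (hg_pos x hxs)) (hΦ_nonneg x)

lemma div_mul_rpow_le_of_le_mul_rpow_neg {e C r α y : ℝ} (hr : 0 < r) (hC : 0 < C)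
    (h : e ≤ C * (r ^ (-α) * y)) : e / C * r ^ α ≤ y := by
  have hrα : 0 < r ^ α := Real.rpow_pos_of_pos hr α
  rw [Real.rpow_neg hr.le] at h
  rw [div_mul_eq_mul_div, div_le_iff₀ hC]
  calc e * r ^ α ≤ C * ((r ^ α)⁻¹ * y) * r ^ α := mul_le_mul_of_nonneg_right h hrα.le
    _ = y * C := by field_simp

theorem statement5_general
    (Φ : ℝ → ℝ) (hΦmeas : Measurable Φ) (hΦ0 : ∀ s, 0 ≤ Φ s)
    (hΦne : ¬ (∀ᵐ s ∂(volume.restrict (Set.Ioi (0:ℝ))), Φ s = 0))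
    (α C : ℝ) (hC : 0 < C)
    (I : Set ℝ) (hIconn : I.OrdConnected)
    (hIunb : ¬ BddAbove I)
    (h : ∀ r ∈ I,
      ∫⁻ s in Set.Ioo 0 r, ENNReal.ofReal (s ^ (-α - 1) * Φ s) ≤
        ENNReal.ofReal (C * (r ^ (-α) * Φ r))) :
    ∃ c > 0, ∃ r₀ : ℝ, ∀ r ≥ r₀, c * r ^ α ≤ Φ r := by
  obtain ⟨R, hR, hR_ne⟩ := exists_lt_not_ae_restrict_Ioo hΦne
  set ε := ∫⁻ s in Ioo 0 R, ENNReal.ofReal (s ^ (-α - 1) * Φ s)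
  have hε : 0 < ε := setLIntegral_ofReal_mul_pos measurableSet_Ioo (by fun_prop) hΦmeas
    (fun s hs => Real.rpow_pos_of_pos hs.1 _) hΦ0 hR_ne
  obtain ⟨r₁, hr₁I, hRr₁⟩ := not_bddAbove_iff.1 hIunb R
  have hε_le : ∀ r ≥ r₁, ε ≤ ENNReal.ofReal (C * (r ^ (-α) * Φ r)) := fun r hr =>
    (lintegral_mono_set (Ioo_subset_Ioo_right (hRr₁.le.trans hr))).trans
      (h r (hIconn.Ici_subset_of_not_bddAbove hIunb hr₁I hr))
  have hε_top : ε ≠ ⊤ := ne_top_of_le_ne_top ENNReal.ofReal_ne_top (hε_le r₁ le_rfl)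
  refine ⟨ε.toReal / C, div_pos (ENNReal.toReal_pos hε.ne' hε_top) hC, r₁, fun r hr => ?_⟩
  have hr_pos : 0 < r := by linarith
  refine div_mul_rpow_le_of_le_mul_rpow_neg hr_pos hC
    (ENNReal.toReal_le_of_le_ofReal ?_ (hε_le r hr))
  exact mul_nonneg hC.le (mul_nonneg (Real.rpow_nonneg hr_pos.le _) (hΦ0 r))

/-- Let `Φ ≥ 0` be measurable (finite, not a.e. zero on `(0,∞)`), `α > 0`,
and suppose `∫₀^r s^{−α−1} Φ(s) ds ≤ C r^{−α} Φ(r)` for all `r` in an unbounded interval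
`I ⊆ (0,∞)`. Then `Φ(r) ≥ c r^α` for some `c > 0` and all sufficiently large `r`. -/
theorem statement5
    (Φ : ℝ → ℝ) (hΦmeas : Measurable Φ) (hΦ0 : ∀ s, 0 ≤ Φ s)
    (hΦne : ¬ (∀ᵐ s ∂(volume.restrict (Set.Ioi (0:ℝ))), Φ s = 0))
    (α C : ℝ) (hα : 0 < α) (hC : 0 < C)
    (I : Set ℝ) (hIconn : I.OrdConnected) (hIsub : I ⊆ Set.Ioi 0)
    (hIne : I.Nonempty) (hIunb : ¬ BddAbove I)
    (h : ∀ r ∈ I,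
      ∫⁻ s in Set.Ioo 0 r, ENNReal.ofReal (s ^ (-α - 1) * Φ s) ≤
        ENNReal.ofReal (C * (r ^ (-α) * Φ r))) :
    ∃ c > 0, ∃ r₀ : ℝ, ∀ r ≥ r₀, c * r ^ α ≤ Φ r :=
  statement5_general Φ hΦmeas hΦ0 hΦne α C hC I hIconn hIunb h
end

section
/- Let f : (0,∞) → [0,∞) be locally integrable, α > 0, and suppose s ↦ f(s) s^{−α} is nondecreasing for s > r₀ ≥ 0. Then for all r > 2r₀: ∫_{r₀}^r f(s) s^{−α} ds ≤ 2^{α+1} r^{−α} ∫₀^r f(s) ds. -/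
open MeasureTheory Set

open scoped ENNReal

/-!
On `(r₀, r)` the weight `s ^ (-α)` is not bounded, but the nondecreasing integrand
`f(s) s^{-α}` can be pushed to the right: translating `(r₀, r/2)` by `r/2` lands inside
`[r/2, r)`, so the whole integral is at most twice the integral over `[r/2, r)`.
There `s ^ (-α) ≤ (r/2) ^ (-α) = 2 ^ α r ^ (-α)`.
-/

lemma setLIntegral_Ioo_le_shift_of_monotoneOn {g : ℝ → ℝ≥0∞} {a b h : ℝ}
    (hg : MonotoneOn g (Ioi a)) (hh : 0 ≤ h) :
    ∫⁻ s in Ioo a b, g s ≤ ∫⁻ s in Ioo (a + h) (b + h), g s := by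
  calc ∫⁻ s in Ioo a b, g s
      ≤ ∫⁻ s in Ioo a b, g (s + h) :=
        setLIntegral_mono' measurableSet_Ioo fun s hs =>
          hg hs.1 (mem_Ioi.2 (by linarith [hs.1])) (le_add_of_nonneg_right hh)
    _ = ∫⁻ s in Ioo (a + h) (b + h), g s := by
        rw [(measurePreserving_add_right volume h).setLIntegral_comp_emb
          (measurableEmbedding_addRight h), image_add_const_Ioo]

lemma setLIntegral_Ioo_le_two_mul_of_monotoneOn {g : ℝ → ℝ≥0∞} {a m b : ℝ}
    (hg : MonotoneOn g (Ioi a)) (ham : a < m) (hmb : m - a ≤ b - m) :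
    ∫⁻ s in Ioo a b, g s ≤ 2 * ∫⁻ s in Ico m b, g s := by
  have hlow : ∫⁻ s in Ioo a m, g s ≤ ∫⁻ s in Ico m b, g s :=
    calc ∫⁻ s in Ioo a m, g s
        ≤ ∫⁻ s in Ioo (a + (b - m)) (m + (b - m)), g s :=
          setLIntegral_Ioo_le_shift_of_monotoneOn hg (by linarith)
      _ ≤ ∫⁻ s in Ico m b, g s :=
          lintegral_mono_set fun s hs => ⟨by linarith [hs.1], by linarith [hs.2]⟩
  rw [← Ioo_union_Ico_eq_Ioo ham (by linarith), two_mul]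
  exact (lintegral_union_le _ _ _).trans (add_le_add hlow le_rfl)

lemma setLIntegral_mul_rpow_neg_le {f : ℝ → ℝ} {α a b : ℝ} (hα : 0 ≤ α) (ha : 0 < a) :
    ∫⁻ s in Ico a b, ENNReal.ofReal (f s * s ^ (-α)) ≤
      ENNReal.ofReal (a ^ (-α)) * ∫⁻ s in Ico a b, ENNReal.ofReal (f s) := by
  rw [← lintegral_const_mul' _ _ ENNReal.ofReal_ne_top]
  refine setLIntegral_mono' measurableSet_Ico fun s hs => ?_
  have hs0 : 0 < s := ha.trans_le hs.1
  rw [ENNReal.ofReal_mul' (Real.rpow_nonneg hs0.le _), mul_comm]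
  exact mul_le_mul_left
    (ENNReal.ofReal_le_ofReal (Real.rpow_le_rpow_of_nonpos ha hs.1 (neg_nonpos.2 hα))) _

lemma two_mul_half_rpow_neg {r : ℝ} (hr : 0 ≤ r) (α : ℝ) :
    2 * (r / 2) ^ (-α) = 2 ^ (α + 1) * r ^ (-α) := by
  rw [Real.div_rpow hr zero_le_two, Real.rpow_neg zero_le_two,
    Real.rpow_add zero_lt_two, Real.rpow_one]
  field_simp

theorem statement6_general
    (f : ℝ → ℝ)
    (α r₀ : ℝ) (hα : 0 < α) (hr₀ : 0 ≤ r₀)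
    (hmono : ∀ s₁ s₂, r₀ < s₁ → s₁ ≤ s₂ → f s₁ * s₁ ^ (-α) ≤ f s₂ * s₂ ^ (-α)) :
    ∀ r, 2 * r₀ < r →
      ∫⁻ s in Set.Ioo r₀ r, ENNReal.ofReal (f s * s ^ (-α)) ≤
        ENNReal.ofReal (2 ^ (α + 1) * r ^ (-α)) *
          ∫⁻ s in Set.Ioo 0 r, ENNReal.ofReal (f s) := by
  intro r hr
  have hr0 : 0 < r := by linarith
  have hg : MonotoneOn (fun s => ENNReal.ofReal (f s * s ^ (-α))) (Ioi r₀) :=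
    fun s₁ hs₁ s₂ _ h => ENNReal.ofReal_le_ofReal (hmono s₁ s₂ hs₁ h)
  calc ∫⁻ s in Ioo r₀ r, ENNReal.ofReal (f s * s ^ (-α))
      ≤ 2 * ∫⁻ s in Ico (r / 2) r, ENNReal.ofReal (f s * s ^ (-α)) :=
        setLIntegral_Ioo_le_two_mul_of_monotoneOn hg (by linarith) (by linarith)
    _ ≤ 2 * (ENNReal.ofReal ((r / 2) ^ (-α)) * ∫⁻ s in Ico (r / 2) r, ENNReal.ofReal (f s)) := by
        gcongr
        exact setLIntegral_mul_rpow_neg_le hα.le (by linarith)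
    _ ≤ 2 * (ENNReal.ofReal ((r / 2) ^ (-α)) * ∫⁻ s in Ioo 0 r, ENNReal.ofReal (f s)) := by
        gcongr _ * (_ * ?_)
        exact lintegral_mono_set fun s hs => ⟨by linarith [hs.1], hs.2⟩
    _ = ENNReal.ofReal (2 ^ (α + 1) * r ^ (-α)) * ∫⁻ s in Ioo 0 r, ENNReal.ofReal (f s) := by
        rw [← mul_assoc, ← two_mul_half_rpow_neg hr0.le, ENNReal.ofReal_mul zero_le_two,
          ENNReal.ofReal_ofNat]

/-- If `f ≥ 0` is locally integrable on `(0,∞)`, `α > 0`, and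
`s ↦ f(s) s^{−α}` is nondecreasing for `s > r₀ ≥ 0`, then for all `r > 2r₀`:
`∫_{r₀}^r f(s) s^{−α} ds ≤ 2^{α+1} r^{−α} ∫₀^r f(s) ds`. -/
theorem statement6
    (f : ℝ → ℝ) (hfmeas : Measurable f) (hf0 : ∀ s, 0 ≤ f s)
    (hfloc : LocallyIntegrableOn f (Set.Ioi 0))
    (α r₀ : ℝ) (hα : 0 < α) (hr₀ : 0 ≤ r₀)
    (hmono : ∀ s₁ s₂, r₀ < s₁ → s₁ ≤ s₂ → f s₁ * s₁ ^ (-α) ≤ f s₂ * s₂ ^ (-α)) :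
    ∀ r, 2 * r₀ < r →
      ∫⁻ s in Set.Ioo r₀ r, ENNReal.ofReal (f s * s ^ (-α)) ≤
        ENNReal.ofReal (2 ^ (α + 1) * r ^ (-α)) *
          ∫⁻ s in Set.Ioo 0 r, ENNReal.ofReal (f s) :=
  statement6_general f α r₀ hα hr₀ hmono
end

section
/- Let ν be a finite Borel measure on [0,∞), γ > 0, r > 0, and Φ a nonnegative measurable function on [0,r] with ν([0,x)) ≤ A·Φ(x) for all x ∈ [0,r] (A ≥ 0) and ∫₀^r s^{−2γ−1} Φ(s) ds ≤ M r^{−2γ} Φ(r). Then ∫_{[0,r)} s^{−2γ} dν(s) ≤ (1 + 2γM) A r^{−2γ} Φ(r). -/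
/-!
For `0 ≤ s < r` one has `s^{-p} = r^{-p} + p ∫_s^r u^{-p-1} du` in `[0, ∞]`, both sides being `∞`
at `s = 0`. Integrating over `[0, r)` against `ν` and exchanging the integrals (Tonelli) gives
`∫_{[0,r)} s^{-p} dν = r^{-p} ν[0,r) + p ∫_0^r u^{-p-1} ν[0,u) du`. With `p = 2γ`, bounding
`ν[0,u) ≤ A Φ(u)` in both terms and using the hypothesis on `∫_0^r u^{-2γ-1} Φ(u) du` yields
the claim.
-/

open MeasureTheory Set Function
open scoped ENNReal

theorem setLIntegral_Ioo_rpow_neg_sub_one {p s r : ℝ} (hp : 0 < p) (hs : 0 < s) (hsr : s ≤ r) :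
    ∫⁻ u in Ioo s r, ENNReal.ofReal (u ^ (-p - 1)) =
      ENNReal.ofReal ((s ^ (-p) - r ^ (-p)) / p) := by
  have hpos : ∀ u ∈ Icc s r, 0 < u := fun u hu => hs.trans_le hu.1
  have hint : IntegrableOn (fun u : ℝ => u ^ (-p - 1)) (Ioo s r) :=
    (ContinuousOn.integrableOn_Icc (ContinuousOn.rpow_const continuousOn_id
      fun u hu => Or.inl (hpos u hu).ne')).mono_set Ioo_subset_Icc_self
  rw [← ofReal_integral_eq_lintegral_ofReal hint
    ((ae_restrict_iff' measurableSet_Ioo).2 (ae_of_all _ fun u hu =>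
      Real.rpow_nonneg (hpos u (Ioo_subset_Icc_self hu)).le _)),
    ← integral_Ioc_eq_integral_Ioo, ← intervalIntegral.integral_of_le hsr,
    integral_rpow (Or.inr ⟨by linarith, notMem_uIcc_of_lt hs (hs.trans_le hsr)⟩),
    sub_add_cancel]
  congr 1
  field_simp
  ring

theorem setLIntegral_Ioo_zero_rpow_eq_top {c r : ℝ} (hc : c ≤ -1) (hr : 0 < r) :
    ∫⁻ u in Ioo 0 r, ENNReal.ofReal (u ^ c) = ∞ := by
  by_contra h
  have hint := (lintegral_ofReal_ne_top_iff_integrable (by fun_prop)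
    ((ae_restrict_iff' measurableSet_Ioo).2 (ae_of_all _ fun u (hu : u ∈ Ioo 0 r) =>
      Real.rpow_nonneg hu.1.le c))).1 h
  exact hc.not_gt ((intervalIntegral.integrableOn_Ioo_rpow_iff hr).1 hint)

theorem ofReal_rpow_neg_eq_add_setLIntegral {p s r : ℝ} (hp : 0 < p) (hs : 0 ≤ s) (hsr : s < r) :
    ENNReal.ofReal s ^ (-p) =
      ENNReal.ofReal (r ^ (-p)) +
        ENNReal.ofReal p * ∫⁻ u in Ioo s r, ENNReal.ofReal (u ^ (-p - 1)) := by
  rcases hs.eq_or_lt with rfl | hs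
  · rw [setLIntegral_Ioo_zero_rpow_eq_top (by linarith) hsr, ENNReal.mul_top (by simpa using hp),
      add_top, ENNReal.ofReal_zero, ENNReal.zero_rpow_of_neg (by linarith)]
  · have hrs : r ^ (-p) ≤ s ^ (-p) := Real.rpow_le_rpow_of_nonpos hs hsr.le (by linarith)
    rw [setLIntegral_Ioo_rpow_neg_sub_one hp hs hsr.le, ← ENNReal.ofReal_mul hp.le,
      ← ENNReal.ofReal_add (Real.rpow_nonneg (hs.trans hsr).le _)
        (mul_nonneg hp.le (div_nonneg (sub_nonneg.2 hrs) hp.le)),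
      ENNReal.ofReal_rpow_of_pos hs, mul_div_cancel₀ _ hp.ne', add_sub_cancel]

theorem setLIntegral_Ico_setLIntegral_Ioo_eq (ν : Measure ℝ) [SFinite ν] {f : ℝ → ℝ≥0∞}
    (hf : Measurable f) (a r : ℝ) :
    ∫⁻ s in Ico a r, (∫⁻ u in Ioo s r, f u) ∂ν = ∫⁻ u in Ioo a r, f u * ν (Ico a u) := by
  have hF : Measurable (uncurry fun s u => (Ioi s).indicator f u) :=
    (hf.comp measurable_snd).indicator (measurableSet_lt measurable_fst measurable_snd)
  calc ∫⁻ s in Ico a r, (∫⁻ u in Ioo s r, f u) ∂ν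
      = ∫⁻ s in Ico a r, (∫⁻ u in Ioo a r, (Ioi s).indicator f u) ∂ν := by
        refine setLIntegral_congr_fun measurableSet_Ico fun s hs => ?_
        rw [lintegral_indicator measurableSet_Ioi, Measure.restrict_restrict measurableSet_Ioi]
        congr 2
        ext u
        simp only [mem_Ico, mem_inter_iff, mem_Ioi, mem_Ioo] at hs ⊢
        grind
    _ = ∫⁻ u in Ioo a r, ∫⁻ s in Ico a r, (Ioi s).indicator f u ∂ν :=
        lintegral_lintegral_swap (μ := ν.restrict (Ico a r)) hF.aemeasurable
    _ = ∫⁻ u in Ioo a r, f u * ν (Ico a u) := by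
        refine setLIntegral_congr_fun measurableSet_Ioo fun u hu => ?_
        change ∫⁻ s in Ico a r, (Iio u).indicator (fun _ => f u) s ∂ν = _
        rw [lintegral_indicator measurableSet_Iio, setLIntegral_const,
          Measure.restrict_apply measurableSet_Iio]
        congr 2
        ext s
        simp only [mem_Ioo, mem_inter_iff, mem_Iio, mem_Ico] at hu ⊢
        grind

theorem setLIntegral_Ico_rpow_neg_eq (ν : Measure ℝ) [SFinite ν] {p : ℝ} (hp : 0 < p) (r : ℝ) :
    ∫⁻ s in Ico 0 r, ENNReal.ofReal s ^ (-p) ∂ν =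
      ENNReal.ofReal (r ^ (-p)) * ν (Ico 0 r) +
        ENNReal.ofReal p * ∫⁻ u in Ioo 0 r, ENNReal.ofReal (u ^ (-p - 1)) * ν (Ico 0 u) := by
  have hf : Measurable fun u : ℝ => ENNReal.ofReal (u ^ (-p - 1)) := by fun_prop
  rw [setLIntegral_congr_fun measurableSet_Ico
      fun s hs => ofReal_rpow_neg_eq_add_setLIntegral hp hs.1 hs.2,
    lintegral_add_left measurable_const, setLIntegral_const,
    lintegral_const_mul' _ _ ENNReal.ofReal_ne_top, setLIntegral_Ico_setLIntegral_Ioo_eq ν hf]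

theorem statement14_general
    (ν : Measure ℝ) [IsFiniteMeasure ν]
    (Φ : ℝ → ℝ)
    (γ r A M : ℝ) (hγ : 0 < γ) (hr : 0 < r) (hA : 0 ≤ A) (hM : 0 < M)
    (hbound : ∀ x ∈ Set.Icc 0 r, (ν (Set.Ico 0 x)).toReal ≤ A * Φ x)
    (hadm : ∫⁻ s in Set.Ioo 0 r, ENNReal.ofReal (s ^ (-(2 * γ) - 1) * Φ s) ≤
      ENNReal.ofReal (M * (r ^ (-(2 * γ)) * Φ r))) :
    ∫⁻ s in Set.Ico 0 r, (ENNReal.ofReal s) ^ (-(2 * γ)) ∂ν ≤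
      ENNReal.ofReal ((1 + 2 * γ * M) * A * (r ^ (-(2 * γ)) * Φ r)) := by
  set p := 2 * γ
  have hp : 0 < p := by positivity
  have hν : ∀ x ∈ Icc 0 r, ν (Ico 0 x) ≤ ENNReal.ofReal (A * Φ x) := fun x hx =>
    (ENNReal.ofReal_toReal (measure_ne_top ν _)).symm.trans_le
      (ENNReal.ofReal_le_ofReal (hbound x hx))
  have hr_mem : r ∈ Icc 0 r := ⟨hr.le, le_rfl⟩
  have hAΦ : 0 ≤ A * Φ r := ENNReal.toReal_nonneg.trans (hbound r hr_mem)
  have hintegral : ∫⁻ u in Ioo 0 r, ENNReal.ofReal (u ^ (-p - 1)) * ν (Ico 0 u) ≤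
      ENNReal.ofReal (A * (M * (r ^ (-p) * Φ r))) := calc
    _ ≤ ∫⁻ u in Ioo 0 r, ENNReal.ofReal A * ENNReal.ofReal (u ^ (-p - 1) * Φ u) := by
      refine setLIntegral_mono' measurableSet_Ioo fun u hu => ?_
      rw [← ENNReal.ofReal_mul hA, mul_left_comm,
        ENNReal.ofReal_mul (Real.rpow_nonneg hu.1.le _)]
      exact mul_le_mul_right (hν u (Ioo_subset_Icc_self hu)) _
    _ ≤ _ := by
      rw [lintegral_const_mul' _ _ ENNReal.ofReal_ne_top, ENNReal.ofReal_mul hA]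
      exact mul_le_mul_right hadm _
  have hrp : 0 ≤ r ^ (-p) := Real.rpow_nonneg hr.le _
  calc _ = ENNReal.ofReal (r ^ (-p)) * ν (Ico 0 r) +
        ENNReal.ofReal p * ∫⁻ u in Ioo 0 r, ENNReal.ofReal (u ^ (-p - 1)) * ν (Ico 0 u) :=
        setLIntegral_Ico_rpow_neg_eq ν hp r
    _ ≤ ENNReal.ofReal (r ^ (-p)) * ENNReal.ofReal (A * Φ r) +
        ENNReal.ofReal p * ENNReal.ofReal (A * (M * (r ^ (-p) * Φ r))) :=
        add_le_add (mul_le_mul_right (hν r hr_mem) _) (mul_le_mul_right hintegral _)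
    _ = ENNReal.ofReal ((1 + p * M) * A * (r ^ (-p) * Φ r)) := by
        rw [← ENNReal.ofReal_mul hrp, ← ENNReal.ofReal_mul hp.le,
          ← ENNReal.ofReal_add (mul_nonneg hrp hAΦ)
          ((mul_nonneg (mul_nonneg (mul_nonneg hp.le hM.le) hrp) hAΦ).trans_eq (by ring))]
        congr 1
        ring

/-- `ν` a finite Borel measure on `[0,∞)`, `γ > 0`, `r > 0`, `Φ ≥ 0`
measurable on `[0,r]` with `ν([0,x)) ≤ A Φ(x)` for `x ∈ [0,r]` and
`∫₀^r s^{−2γ−1} Φ(s) ds ≤ M r^{−2γ} Φ(r)`. Then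
`∫_{[0,r)} s^{−2γ} dν(s) ≤ (1 + 2γM) A r^{−2γ} Φ(r)`
(the integral taken in `[0,∞]`, with `0^{−2γ} = ∞`). -/
theorem statement14
    (ν : Measure ℝ) [IsFiniteMeasure ν] (hsupp : ν (Set.Iio 0) = 0)
    (Φ : ℝ → ℝ) (hΦmeas : Measurable Φ) (hΦ0 : ∀ s, 0 ≤ Φ s)
    (γ r A M : ℝ) (hγ : 0 < γ) (hr : 0 < r) (hA : 0 ≤ A) (hM : 0 < M)
    (hbound : ∀ x ∈ Set.Icc 0 r, (ν (Set.Ico 0 x)).toReal ≤ A * Φ x)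
    (hadm : ∫⁻ s in Set.Ioo 0 r, ENNReal.ofReal (s ^ (-(2 * γ) - 1) * Φ s) ≤
      ENNReal.ofReal (M * (r ^ (-(2 * γ)) * Φ r))) :
    ∫⁻ s in Set.Ico 0 r, (ENNReal.ofReal s) ^ (-(2 * γ)) ∂ν ≤
      ENNReal.ofReal ((1 + 2 * γ * M) * A * (r ^ (-(2 * γ)) * Φ r)) :=
  statement14_general ν Φ γ r A M hγ hr hA hM hbound hadm
end

section
/- Let H be a Hilbert space, L a positive self-adjoint operator on H with spectral projections E_t = E([0,t)), and suppose for some f ∈ H, constants C, γ, δ > 0 one has ‖E_{1/t} f‖ ≤ C t^{−γδ} ‖T^γ f‖ for all t > 0 (T positive self-adjoint). Then also ‖e^{−tL} f‖ ≤ C' t^{−γδ} ‖T^γ f‖ for all t > 0, where C' = C (e−1) Σ_{j=1}^∞ e^{−j} j^{γδ} < ∞. -/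
/-!
For `x ≥ 0`, `e^{-x} ≤ e^{-⌊x⌋} = (e - 1) ∑_{j ≥ ⌊x⌋} e^{-(j+1)}`, so on `[0, ∞)` the function
`e^{-tλ}` is dominated by the step function `(e - 1) ∑_j e^{-(j+1)} 𝟙_{[0, (j+1)/t)}(λ)`.
Minkowski's inequality for this countable sum in `L²(μ)` gives
`‖e^{-tL} f‖ ≤ (e - 1) ∑_j e^{-(j+1)} ‖E_{(j+1)/t} f‖`, and the hypothesis at time `t / (j+1)`
bounds the `j`-th term by `C t^{-γδ} e^{-(j+1)} (j+1)^{γδ} ‖T^γ f‖`.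
-/

open MeasureTheory Real Set ENNReal

namespace MeasureTheory

variable {α : Type*} [MeasurableSpace α] {μ : Measure α}

theorem eLpNorm'_tsum_le {g : ℕ → α → ℝ≥0∞} (hg : ∀ j, AEMeasurable (g j) μ) {q : ℝ}
    (hq : 1 ≤ q) : eLpNorm' (fun a => ∑' j, g j a) q μ ≤ ∑' j, eLpNorm' (g j) q μ := by
  have hq0 : 0 < q := by linarith
  let F : ℕ → α → ℝ≥0∞ := fun n => ∑ j ∈ Finset.range n, g j
  have hF_mono : ∀ a, Monotone fun n => F n a := fun a m n hmn => by
    simp only [F, Finset.sum_apply]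
    exact Finset.sum_le_sum_of_subset (Finset.range_subset_range.2 hmn)
  have hF_meas : ∀ n, AEMeasurable (F n) μ := fun n => Finset.aemeasurable_sum _ fun j _ => hg j
  have htsum : (fun a => ∑' j, g j a) = fun a => ⨆ n, F n a := by
    ext a
    simp only [F, Finset.sum_apply]
    exact ENNReal.tsum_eq_iSup_nat
  have hlim : eLpNorm' (fun a => ⨆ n, F n a) q μ = ⨆ n, eLpNorm' (F n) q μ := by
    simp only [eLpNorm'_eq_lintegral_enorm, enorm_eq_self]
    have hrpow := fun a => (orderIsoRpow q hq0).map_iSup fun n => F n a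
    simp only [orderIsoRpow_apply] at hrpow
    simp only [hrpow]
    rw [lintegral_iSup' (fun n => (hF_meas n).pow_const q)
      (.of_forall fun a m n hmn => rpow_le_rpow (hF_mono a hmn) hq0.le)]
    exact (orderIsoRpow (1 / q) (by positivity)).map_iSup _
  rw [htsum, hlim]
  refine iSup_le fun n => ?_
  calc eLpNorm' (F n) q μ ≤ ∑ j ∈ Finset.range n, eLpNorm' (g j) q μ :=
        eLpNorm'_sum_le (fun j _ => (hg j).aestronglyMeasurable) hq
    _ ≤ ∑' j, eLpNorm' (g j) q μ := ENNReal.sum_le_tsum _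

theorem eLpNorm'_indicator_const {s : Set α} (hs : MeasurableSet s) (c : ℝ≥0∞) {q : ℝ}
    (hq : 0 < q) : eLpNorm' (s.indicator fun _ => c) q μ = c * μ s ^ (1 / q) := by
  have hq' : ENNReal.ofReal q ≠ 0 := by simpa using hq
  have h := eLpNorm_indicator_const (μ := μ) (c := c) hs hq' ofReal_ne_top
  rwa [eLpNorm_eq_eLpNorm' hq' ofReal_ne_top, toReal_ofReal hq.le, enorm_eq_self] at h

end MeasureTheory

namespace Real

theorem summable_exp_neg_succ_mul_rpow (a : ℝ) :
    Summable fun j : ℕ => exp (-((j : ℝ) + 1)) * ((j : ℝ) + 1) ^ a := by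
  have h := (summable_nat_add_iff 1).2 (summable_pow_mul_exp_neg_nat_mul ⌈a⌉₊ one_pos)
  refine h.of_nonneg_of_le (fun j => by positivity) fun j => ?_
  push_cast
  rw [neg_one_mul, mul_comm, ← rpow_natCast]
  gcongr
  · linarith [(j.cast_nonneg : (0 : ℝ) ≤ j)]
  · exact Nat.le_ceil a

theorem hasSum_exp_neg_tail (k : ℕ) :
    HasSum (fun i : ℕ => (exp 1 - 1) * exp (-(((k + i : ℕ) : ℝ) + 1))) (exp (-k)) := by
  have hterm : ∀ i : ℕ, (exp 1 - 1) * exp (-(((k + i : ℕ) : ℝ) + 1)) =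
      (exp 1 - 1) * exp (-(k + 1)) * exp (-1) ^ i := fun i => by
    rw [← exp_nat_mul, mul_assoc, ← exp_add]
    push_cast
    ring_nf
  have hval : (exp 1 - 1) * exp (-(k + 1)) * (1 - exp (-1))⁻¹ = exp (-k) := by
    have : exp 1 - 1 ≠ 0 := by linarith [add_one_lt_exp one_ne_zero]
    rw [neg_add, exp_add, exp_neg 1]
    field_simp
  rw [funext hterm, ← hval]
  exact (hasSum_geometric_of_lt_one (exp_nonneg (-1))
    (exp_lt_one_iff.2 neg_one_lt_zero)).mul_left _

end Real

theorem ofReal_exp_neg_mul_le_tsum_indicator {t l : ℝ} (ht : 0 < t) (hl : 0 ≤ l) :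
    ENNReal.ofReal (exp (-(t * l))) ≤
      ∑' j : ℕ, (Ico 0 ((j + 1) / t)).indicator
        (fun _ => ENNReal.ofReal ((exp 1 - 1) * exp (-(j + 1)))) l := by
  set k := ⌊t * l⌋₊
  set G : ℕ → ℝ≥0∞ := fun j =>
    (Ico 0 ((j + 1) / t)).indicator (fun _ => ENNReal.ofReal ((exp 1 - 1) * exp (-(j + 1)))) l
  have hmem : ∀ i : ℕ, l ∈ Ico 0 ((((k + i : ℕ) : ℝ) + 1) / t) := fun i => by
    refine ⟨hl, (lt_div_iff₀ ht).2 ?_⟩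
    calc l * t = t * l := mul_comm l t
      _ < k + 1 := Nat.lt_floor_add_one (t * l)
      _ ≤ ((k + i : ℕ) : ℝ) + 1 := by gcongr; exact Nat.le_add_right k i
  calc ENNReal.ofReal (exp (-(t * l)))
      ≤ ENNReal.ofReal (exp (-k)) :=
        ofReal_le_ofReal (exp_le_exp.2 (neg_le_neg (Nat.floor_le (by positivity))))
    _ = ∑' i : ℕ, ENNReal.ofReal ((exp 1 - 1) * exp (-(((k + i : ℕ) : ℝ) + 1))) := by
        rw [← ofReal_tsum_of_nonneg (fun i => ?_) (hasSum_exp_neg_tail k).summable,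
          (hasSum_exp_neg_tail k).tsum_eq]
        exact mul_nonneg (sub_nonneg.2 (one_le_exp zero_le_one)) (exp_nonneg _)
    _ = ∑' i : ℕ, G (k + i) := tsum_congr fun i => by simp only [G, indicator_of_mem (hmem i)]
    _ ≤ ∑' j, G j := ENNReal.tsum_comp_le_tsum_of_injective (add_right_injective k) G

theorem lintegral_exp_neg_rpow_half_le_tsum {μ : Measure ℝ} (hμ : μ (Iio 0) = 0) {t : ℝ}
    (ht : 0 < t) :
    (∫⁻ l, ENNReal.ofReal (exp (-(2 * t * l))) ∂μ) ^ ((1 : ℝ) / 2) ≤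
      ∑' j : ℕ, ENNReal.ofReal ((exp 1 - 1) * exp (-(j + 1))) *
        μ (Ico 0 ((j + 1) / t)) ^ ((1 : ℝ) / 2) := by
  set g : ℕ → ℝ → ℝ≥0∞ := fun j =>
    (Ico 0 ((j + 1) / t)).indicator fun _ => ENNReal.ofReal ((exp 1 - 1) * exp (-(j + 1)))
  have hpointwise : ∀ᵐ l ∂μ, ENNReal.ofReal (exp (-(2 * t * l))) ≤ (∑' j, g j l) ^ (2 : ℝ) := by
    filter_upwards [measure_eq_zero_iff_ae_notMem.1 hμ] with l hl
    have hsq : exp (-(2 * t * l)) = exp (-(t * l)) ^ 2 := by rw [← exp_nat_mul]; ring_nf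
    rw [hsq, ofReal_pow (exp_nonneg _), ← ENNReal.rpow_ofNat]
    gcongr
    exact ofReal_exp_neg_mul_le_tsum_indicator ht (not_lt.1 hl)
  calc (∫⁻ l, ENNReal.ofReal (exp (-(2 * t * l))) ∂μ) ^ ((1 : ℝ) / 2)
      ≤ eLpNorm' (fun l => ∑' j, g j l) 2 μ := by
        rw [eLpNorm'_eq_lintegral_enorm]
        gcongr ?_ ^ _
        exact lintegral_mono_ae hpointwise
    _ ≤ ∑' j, eLpNorm' (g j) 2 μ :=
        eLpNorm'_tsum_le (fun j => (measurable_const.indicator measurableSet_Ico).aemeasurable)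
          one_le_two
    _ = _ := tsum_congr fun j => eLpNorm'_indicator_const measurableSet_Ico _ two_pos

theorem statement19_general
    (μ ν : Measure ℝ)
    (hμsupp : μ (Set.Iio 0) = 0)
    (γ δ C : ℝ)
    (hloc : ∀ t > 0,
      (μ (Set.Ico 0 (1 / t))) ^ ((1:ℝ)/2) ≤
        ENNReal.ofReal (C * t ^ (-(γ * δ))) *
          (∫⁻ l, ENNReal.ofReal (l ^ (2 * γ)) ∂ν) ^ ((1:ℝ)/2)) :
    Summable (fun j : ℕ => Real.exp (-((j : ℝ) + 1)) * ((j : ℝ) + 1) ^ (γ * δ)) ∧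
    ∀ t > 0,
      (∫⁻ l, ENNReal.ofReal (Real.exp (-(2 * t * l))) ∂μ) ^ ((1:ℝ)/2) ≤
        ENNReal.ofReal
            ((C * (Real.exp 1 - 1) *
              ∑' j : ℕ, Real.exp (-((j : ℝ) + 1)) * ((j : ℝ) + 1) ^ (γ * δ)) *
              t ^ (-(γ * δ))) *
          (∫⁻ l, ENNReal.ofReal (l ^ (2 * γ)) ∂ν) ^ ((1:ℝ)/2) := by
  set a := γ * δ
  set A := (∫⁻ l, ENNReal.ofReal (l ^ (2 * γ)) ∂ν) ^ ((1:ℝ)/2)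
  have hsum := summable_exp_neg_succ_mul_rpow a
  have he : 0 ≤ exp 1 - 1 := sub_nonneg.2 (one_le_exp zero_le_one)
  refine ⟨hsum, fun t ht => ?_⟩
  have hterm : ∀ j : ℕ, ENNReal.ofReal ((exp 1 - 1) * exp (-(j + 1))) *
      (ENNReal.ofReal (C * (t / (j + 1)) ^ (-a)) * A) =
      ENNReal.ofReal (C * t ^ (-a)) *
        ENNReal.ofReal ((exp 1 - 1) * (exp (-((j : ℝ) + 1)) * ((j : ℝ) + 1) ^ a)) * A := by
    intro j
    rw [← mul_assoc, ← ofReal_mul (by positivity), ← ofReal_mul' (by positivity),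
      div_rpow ht.le (by positivity), rpow_neg (by positivity : (0 : ℝ) ≤ j + 1), div_inv_eq_mul]
    ring_nf
  calc (∫⁻ l, ENNReal.ofReal (exp (-(2 * t * l))) ∂μ) ^ ((1 : ℝ) / 2)
      ≤ ∑' j : ℕ, ENNReal.ofReal ((exp 1 - 1) * exp (-(j + 1))) *
          μ (Ico 0 ((j + 1) / t)) ^ ((1 : ℝ) / 2) := lintegral_exp_neg_rpow_half_le_tsum hμsupp ht
    _ ≤ ∑' j : ℕ, ENNReal.ofReal ((exp 1 - 1) * exp (-(j + 1))) *
          (ENNReal.ofReal (C * (t / (j + 1)) ^ (-a)) * A) := by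
        gcongr with j
        simpa only [one_div_div] using hloc (t / (j + 1)) (by positivity)
    _ = ENNReal.ofReal (C * t ^ (-a)) * ENNReal.ofReal
          (∑' j : ℕ, (exp 1 - 1) * (exp (-((j : ℝ) + 1)) * ((j : ℝ) + 1) ^ a)) * A := by
        rw [tsum_congr hterm, ENNReal.tsum_mul_right, ENNReal.tsum_mul_left,
          ofReal_tsum_of_nonneg (fun j => by positivity) (hsum.mul_left _)]
    _ = _ := by
        rw [← ofReal_mul' (tsum_nonneg fun j => by positivity), tsum_mul_left]
        ring_nf

/-- `L, T` positive self-adjoint on a Hilbert space `H`; for a fixed `f ∈ H`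
encode the spectral data by the finite measures `μ = ‖E(·) f‖²` (for `L`) and
`ν = ‖F(·) f‖²` (for `T`) on `[0,∞)`, so `‖E_s f‖ = μ([0,s))^{1/2}`,
`‖e^{−tL} f‖ = (∫ e^{−2tλ} dμ)^{1/2}` and `‖T^γ f‖ = (∫ λ^{2γ} dν)^{1/2}` in `[0,∞]`.
If `‖E_{1/t} f‖ ≤ C t^{−γδ} ‖T^γ f‖` for all `t > 0`, then
`‖e^{−tL} f‖ ≤ C' t^{−γδ} ‖T^γ f‖` for all `t > 0`, where
`C' = C (e−1) Σ_{j=1}^∞ e^{−j} j^{γδ}` and this series converges. -/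
theorem statement19
    {H : Type*} [NormedAddCommGroup H] [InnerProductSpace ℂ H] (f : H)
    (μ ν : Measure ℝ) [IsFiniteMeasure μ] [IsFiniteMeasure ν]
    (hμsupp : μ (Set.Iio 0) = 0) (hνsupp : ν (Set.Iio 0) = 0)
    (hμtot : μ Set.univ = ENNReal.ofReal (‖f‖ ^ 2))
    (γ δ C : ℝ) (hγ : 0 < γ) (hδ : 0 < δ) (hC : 0 < C)
    (hloc : ∀ t > 0,
      (μ (Set.Ico 0 (1 / t))) ^ ((1:ℝ)/2) ≤
        ENNReal.ofReal (C * t ^ (-(γ * δ))) *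
          (∫⁻ l, ENNReal.ofReal (l ^ (2 * γ)) ∂ν) ^ ((1:ℝ)/2)) :
    Summable (fun j : ℕ => Real.exp (-((j : ℝ) + 1)) * ((j : ℝ) + 1) ^ (γ * δ)) ∧
    ∀ t > 0,
      (∫⁻ l, ENNReal.ofReal (Real.exp (-(2 * t * l))) ∂μ) ^ ((1:ℝ)/2) ≤
        ENNReal.ofReal
            ((C * (Real.exp 1 - 1) *
              ∑' j : ℕ, Real.exp (-((j : ℝ) + 1)) * ((j : ℝ) + 1) ^ (γ * δ)) *
              t ^ (-(γ * δ))) *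
          (∫⁻ l, ENNReal.ofReal (l ^ (2 * γ)) ∂ν) ^ ((1:ℝ)/2) :=
  statement19_general μ ν hμsupp γ δ C hloc
end
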